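/- arXiv:1312.2293 — 4 statements merged into one kernel-verified Lean document; each statement's English description precedes it below -/
import Mathlib

section
/- Let δ ≥ 0, a ≥ 0 and r ≥ 0 be real numbers. There exist r' ≥ 0 and h₀ > 0, depending only on δ, a and r, with the following property. Let Y be a geodesic metric space which is δ-hyperbolic, and let C ⊆ Y be a nonempty a-quasiconvex subset. Let x, y, z ∈ Y be points such that y ∈ C, dist x y ≤ infDist x C + r, and x lies on the image of some geodesic from y to z. If dist x y > h₀, then dist z y ≤ infDist z C + r'. -/
/-- A map `γ : ℝ → Y` is a geodesic from `p` to `q` if it is an isometric map on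
`[0, dist p q]` with `γ 0 = p` and `γ (dist p q) = q`. -/
def IsGeodesicFrom {Y : Type*} [MetricSpace Y] (γ : ℝ → Y) (p q : Y) : Prop :=
  γ 0 = p ∧ γ (dist p q) = q ∧
    ∀ s ∈ Set.Icc (0 : ℝ) (dist p q), ∀ t ∈ Set.Icc (0 : ℝ) (dist p q),
      dist (γ s) (γ t) = |s - t|

/-- A metric space is geodesic if any two points are joined by a geodesic. -/
def IsGeodesicSpace (Y : Type*) [MetricSpace Y] : Prop :=
  ∀ p q : Y, ∃ γ : ℝ → Y, IsGeodesicFrom γ p q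

/-- `Y` is `δ`-hyperbolic (four point condition). -/
def IsDeltaHyperbolic (Y : Type*) [MetricSpace Y] (δ : ℝ) : Prop :=
  ∀ p q s t : Y,
    dist p q + dist s t ≤ max (dist p s + dist q t) (dist p t + dist q s) + 2 * δ

/-- A subset `C` is `a`-quasiconvex if every point of every geodesic between points of `C`
is at distance at most `a` from `C`. -/
def IsQuasiconvexSet {Y : Type*} [MetricSpace Y] (a : ℝ) (C : Set Y) : Prop :=
  ∀ p ∈ C, ∀ q ∈ C, ∀ γ : ℝ → Y, IsGeodesicFrom γ p q →
    ∀ s ∈ Set.Icc (0 : ℝ) (dist p q), Metric.infDist (γ s) C ≤ a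

/-- Lemma on quasiconvex sets in hyperbolic spaces.  If `y ∈ C`,
`dist x y ≤ infDist x C + r`, `x` lies on a geodesic from `y` to `z`, and
`dist x y > h₀`, then `dist z y ≤ infDist z C + r'`. -/
theorem quasiconvex_stability (δ a r : ℝ) (hδ : 0 ≤ δ) (ha : 0 ≤ a) (hr : 0 ≤ r) :
    ∃ r' h₀ : ℝ, 0 ≤ r' ∧ 0 < h₀ ∧
      ∀ (Y : Type) [inst : MetricSpace Y],
        IsGeodesicSpace Y → IsDeltaHyperbolic Y δ →
        ∀ C : Set Y, C.Nonempty → IsQuasiconvexSet a C →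
          ∀ x y z : Y, y ∈ C →
            dist x y ≤ Metric.infDist x C + r →
            (∃ γ : ℝ → Y, IsGeodesicFrom γ y z ∧
              ∃ s ∈ Set.Icc (0 : ℝ) (dist y z), γ s = x) →
            dist x y > h₀ →
            dist z y ≤ Metric.infDist z C + r' := by
  refine ⟨r + 2 * δ, 4 * δ + a + r + 1, by linarith, by linarith, ?_⟩
  intro Y _ hgeo hhyp C hC hQC x y z hy hxy ⟨γ, hγ, s, ⟨hs0, hs1⟩, hγs⟩ hbig
  -- basic distance facts along the geodesic from y to z
  have hyx : dist y x = s := by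
    have := hγ.2.2 0 ⟨le_refl 0, dist_nonneg⟩ s ⟨hs0, hs1⟩
    rw [hγ.1, hγs] at this
    rw [this, abs_of_nonpos (by linarith)]; ring
  have hxz : dist x z = dist y z - s := by
    have := hγ.2.2 s ⟨hs0, hs1⟩ (dist y z) ⟨dist_nonneg, le_refl _⟩
    rw [hγ.2.1, hγs] at this
    rw [this, abs_of_nonpos (by linarith)]; ring
  have hsum : dist y z = dist x y + dist x z := by
    rw [hxz, dist_comm x y, hyx]; ring
  -- lower bound on infDist x C
  have hinfx : dist x y - r ≤ Metric.infDist x C := by linarith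
  -- reduce to an ε-approximation
  refine le_of_forall_pos_le_add ?_
  intro ε hε
  obtain ⟨w, hw, hzw⟩ := (Metric.infDist_lt_iff hC).mp
    (lt_add_of_pos_right (Metric.infDist z C) hε)
  have hxw : Metric.infDist x C ≤ dist x w := Metric.infDist_le_dist_of_mem hw
  -- four-point condition on z, y, x, w
  have H1 := hhyp z y x w
  have czy : dist z y = dist y z := dist_comm z y
  have czx : dist z x = dist x z := dist_comm z x
  have cyx : dist y x = dist x y := dist_comm y x
  have cyw : dist y w = dist w y := dist_comm y w
  have czw : dist z w = dist w z := dist_comm z w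
  rcases le_or_gt (dist z x + dist y w) (dist z w + dist y x) with h1 | h1
  · -- max realized by dist z w + dist y x
    have : dist z y + dist x w ≤ dist z w + dist y x + 2 * δ := by
      calc dist z y + dist x w ≤ _ + 2 * δ := H1
        _ = dist z w + dist y x + 2 * δ := by rw [max_eq_right h1]
    linarith
  · have H1' : dist z y + dist x w ≤ dist z x + dist y w + 2 * δ := by
      calc dist z y + dist x w ≤ _ + 2 * δ := H1
        _ = dist z x + dist y w + 2 * δ := by rw [max_eq_left h1.le]
    have hyw_big : 2 * dist x y - r - 2 * δ ≤ dist y w := by linarith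
    -- four-point condition on x, w, y, z
    have H2 := hhyp x w y z
    rcases le_or_gt (dist x z + dist w y) (dist x y + dist w z) with h2 | h2
    · have : dist x w + dist y z ≤ dist x y + dist w z + 2 * δ := by
        calc dist x w + dist y z ≤ _ + 2 * δ := H2
          _ = dist x y + dist w z + 2 * δ := by rw [max_eq_left h2]
      linarith
    · have H2' : dist x w + dist y z ≤ dist x z + dist w y + 2 * δ := by
        calc dist x w + dist y z ≤ _ + 2 * δ := H2
          _ = dist x z + dist w y + 2 * δ := by rw [max_eq_right h2.le]
      have hxw_up : dist x w ≤ dist w y - dist x y + 2 * δ := by linarith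
      -- place a point m on a geodesic from y to w at parameter dist x y
      obtain ⟨γ', hγ'⟩ := hgeo y w
      have ht : dist x y ∈ Set.Icc (0 : ℝ) (dist y w) :=
        ⟨dist_nonneg, by linarith⟩
      set m := γ' (dist x y) with hm
      have hym : dist y m = dist x y := by
        have := hγ'.2.2 0 ⟨le_refl 0, dist_nonneg⟩ (dist x y) ht
        rw [hγ'.1] at this
        rw [hm, this, abs_of_nonpos (by linarith [dist_nonneg (x := x) (y := y)])]
        ring
      have hmw : dist m w = dist y w - dist x y := by
        have := hγ'.2.2 (dist x y) ht (dist y w) ⟨dist_nonneg, le_refl _⟩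
        rw [hγ'.2.1] at this
        rw [hm, this, abs_of_nonpos (by linarith)]; ring
      have hma : Metric.infDist m C ≤ a := hQC y hy w hw γ' hγ' (dist x y) ht
      -- four-point condition on x, m, y, w gives dist x m ≤ 4δ in all cases
      have H3 := hhyp x m y w
      have cmy : dist m y = dist y m := dist_comm m y
      have hxm : dist x m ≤ 4 * δ := by
        rcases le_or_gt (dist x w + dist m y) (dist x y + dist m w) with h3 | h3
        · have : dist x m + dist y w ≤ dist x y + dist m w + 2 * δ := by
            calc dist x m + dist y w ≤ _ + 2 * δ := H3
              _ = dist x y + dist m w + 2 * δ := by rw [max_eq_left h3]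
          linarith
        · have : dist x m + dist y w ≤ dist x w + dist m y + 2 * δ := by
            calc dist x m + dist y w ≤ _ + 2 * δ := H3
              _ = dist x w + dist m y + 2 * δ := by rw [max_eq_right h3.le]
          linarith
      -- contradiction: x would be (a + 4δ)-close to C
      have : Metric.infDist x C ≤ Metric.infDist m C + dist x m :=
        Metric.infDist_le_infDist_add_dist
      linarith
end

section
/- For all real δ ≥ 0 and R ≥ 0 there exist h > 0 and K ≥ 1, depending only on δ and R, with the following property. Let Y be a geodesic metric space which is δ-hyperbolic and let x₀, x₁, …, xₙ (with n ≥ 1) be an (h,R)-chain in Y. Then for all indices 0 ≤ i ≤ j ≤ n one has dist xᵢ xⱼ ≥ (1/K) · (∑_{l=i}^{j−1} dist x_l x_{l+1}) − K. In particular, dist x₀ xₙ ≥ (1/K) · (∑_{l=0}^{n−1} dist x_l x_{l+1}) − K. -/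
/-- `x 0, x 1, …, x n` is an `(h,R)`-chain: consecutive points are at distance at least
`h`, and for every `0 < i < n` some geodesic from `x (i-1)` to `x (i+1)` passes within
distance `R` of `x i`. -/
def IsHRChain {Y : Type*} [MetricSpace Y] (h R : ℝ) (n : ℕ) (x : ℕ → Y) : Prop :=
  (∀ i < n, h ≤ dist (x i) (x (i + 1))) ∧
    ∀ i, 0 < i → i < n →
      ∃ γ : ℝ → Y, IsGeodesicFrom γ (x (i - 1)) (x (i + 1)) ∧
        ∃ s ∈ Set.Icc (0 : ℝ) (dist (x (i - 1)) (x (i + 1))), dist (γ s) (x i) ≤ R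

/-- an `(h,R)`-chain in a `δ`-hyperbolic geodesic space satisfies a
global lower distance bound in terms of the sum of the consecutive distances. -/
theorem chain_distance_lower_bound (δ R : ℝ) (hδ : 0 ≤ δ) (hR : 0 ≤ R) :
    ∃ h K : ℝ, 0 < h ∧ 1 ≤ K ∧
      ∀ (Y : Type) [inst : MetricSpace Y],
        IsGeodesicSpace Y → IsDeltaHyperbolic Y δ →
        ∀ (n : ℕ) (x : ℕ → Y), 1 ≤ n → IsHRChain h R n x →
          ∀ i j : ℕ, i ≤ j → j ≤ n →
            (1 / K) * (∑ l ∈ Finset.Ico i j, dist (x l) (x (l + 1))) - K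
              ≤ dist (x i) (x j) := by
  refine ⟨2 * (R + δ) + 1, 2 * (R + δ) + 1, by linarith, by linarith, ?_⟩
  intro Y inst _geo hhyp n x hn hchain i j hij hjn
  set M : ℝ := R + δ with hM
  have hM0 : 0 ≤ M := by positivity
  -- main induction
  have main : ∀ j, i + 1 ≤ j → j ≤ n →
      (dist (x i) (x (j - 1)) + dist (x (j - 1)) (x j) - 2 * M ≤ dist (x i) (x j)) ∧
      (∑ l ∈ Finset.Ico i j, dist (x l) (x (l + 1))
          ≤ dist (x i) (x j) + 2 * M * ((j - i - 1 : ℕ) : ℝ)) := by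
    intro j hj
    induction j, hj using Nat.le_induction with
    | base =>
      intro _
      have h1 : i + 1 - 1 = i := by omega
      have h2 : i + 1 - i - 1 = 0 := by omega
      rw [h1, h2]
      constructor
      · simp [dist_self]; linarith
      · rw [Finset.sum_Ico_succ_top (le_refl i), Finset.Ico_self, Finset.sum_empty]
        simp
    | succ j hj ih =>
      intro hjn
      have ihj := ih (by omega)
      have hd1 : 2 * (R + δ) + 1 ≤ dist (x (j - 1)) (x j) := by
        have := hchain.1 (j - 1) (by omega)
        have e : j - 1 + 1 = j := by omega
        rwa [e] at this
      have hd2 : 2 * (R + δ) + 1 ≤ dist (x j) (x (j + 1)) := hchain.1 j (by omega)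
      -- geodesic through x j
      obtain ⟨γ, ⟨hγ0, hγD, hiso⟩, s, hsmem, hsR⟩ := hchain.2 j (by omega) (by omega)
      have hE : dist (x (j - 1)) (x j) + dist (x j) (x (j + 1))
          ≤ dist (x (j - 1)) (x (j + 1)) + 2 * R := by
        have h0mem : (0 : ℝ) ∈ Set.Icc (0 : ℝ) (dist (x (j - 1)) (x (j + 1))) :=
          ⟨le_refl 0, dist_nonneg⟩
        have hDmem : dist (x (j - 1)) (x (j + 1)) ∈
            Set.Icc (0 : ℝ) (dist (x (j - 1)) (x (j + 1))) := ⟨dist_nonneg, le_refl _⟩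
        have e1 : dist (γ 0) (γ s) = s := by
          rw [hiso 0 h0mem s hsmem]
          rw [abs_of_nonpos (by linarith [hsmem.1])]
          ring
        have e2 : dist (γ s) (γ (dist (x (j - 1)) (x (j + 1)))) =
            dist (x (j - 1)) (x (j + 1)) - s := by
          rw [hiso s hsmem _ hDmem, abs_of_nonpos (by linarith [hsmem.2])]
          ring
        rw [hγ0] at e1
        rw [hγD] at e2
        have t1 : dist (x (j - 1)) (x j) ≤ s + R := by
          have := dist_triangle (x (j - 1)) (γ s) (x j)
          rw [e1] at this
          linarith [hsR]
        have t2 : dist (x j) (x (j + 1)) ≤ (dist (x (j - 1)) (x (j + 1)) - s) + R := by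
          have := dist_triangle (x j) (γ s) (x (j + 1))
          rw [e2, dist_comm (x j) (γ s)] at this
          linarith [hsR]
        linarith
      -- hyperbolicity
      have hyp := hhyp (x i) (x j) (x (j - 1)) (x (j + 1))
      have key : dist (x i) (x j) + dist (x j) (x (j + 1)) - 2 * M
          ≤ dist (x i) (x (j + 1)) := by
        rcases le_total (dist (x i) (x (j - 1)) + dist (x j) (x (j + 1)))
            (dist (x i) (x (j + 1)) + dist (x j) (x (j - 1))) with hc | hc
        · rw [max_eq_right hc] at hyp
          have := dist_comm (x j) (x (j - 1))
          linarith [ihj.1]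
        · rw [max_eq_left hc] at hyp
          exfalso
          linarith [ihj.1]
      have e : j + 1 - 1 = j := by omega
      refine ⟨by rw [e]; linarith [(dist_nonneg : 0 ≤ dist (x i) (x j))], ?_⟩
      rw [Finset.sum_Ico_succ_top (by omega : i ≤ j)]
      have ec : ((j + 1 - i - 1 : ℕ) : ℝ) = ((j - i - 1 : ℕ) : ℝ) + 1 := by
        have : j + 1 - i - 1 = (j - i - 1) + 1 := by omega
        rw [this]; push_cast; ring
      rw [ec]
      have := ihj.2
      linarith [key]
  rcases eq_or_lt_of_le hij with rfl | hlt
  · rw [Finset.Ico_self, Finset.sum_empty, dist_self]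
    have : (0:ℝ) < 2 * (R + δ) + 1 := by linarith
    rw [mul_zero]
    linarith
  · obtain ⟨h1, h2⟩ := main j (by omega) hjn
    -- sum is at least h * (j - i)
    have hsum : (2 * (R + δ) + 1) * ((j - i : ℕ) : ℝ)
        ≤ ∑ l ∈ Finset.Ico i j, dist (x l) (x (l + 1)) := by
      have card : (Finset.Ico i j).card = j - i := Nat.card_Ico i j
      calc (2 * (R + δ) + 1) * ((j - i : ℕ) : ℝ)
          = ∑ _l ∈ Finset.Ico i j, (2 * (R + δ) + 1) := by
            rw [Finset.sum_const, card]; push_cast; ring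
        _ ≤ ∑ l ∈ Finset.Ico i j, dist (x l) (x (l + 1)) := by
            apply Finset.sum_le_sum
            intro l hl
            exact hchain.1 l (by have := (Finset.mem_Ico.mp hl).2; omega)
    set S := ∑ l ∈ Finset.Ico i j, dist (x l) (x (l + 1)) with hS
    set K : ℝ := 2 * (R + δ) + 1 with hK
    have hK1 : (1:ℝ) ≤ K := by rw [hK]; linarith
    have hK0 : (0:ℝ) < K := by linarith
    have hc1 : ((j - i - 1 : ℕ) : ℝ) + 1 = ((j - i : ℕ) : ℝ) := by
      have : (j - i - 1) + 1 = j - i := by omega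
      rw [← this]; push_cast; ring
    -- dist ≥ S - 2M * (j-i-1), S ≥ K * (j-i), K = 2M+1
    have hKM : K = 2 * M + 1 := by rw [hK, hM]
    rw [← hc1] at hsum
    have hKS : K * S = 2 * M * S + S := by rw [hKM]; ring
    have key2 : S ≤ K * dist (x i) (x j) + K * K := by
      nlinarith [mul_le_mul_of_nonneg_left h2 hK0.le,
        mul_le_mul_of_nonneg_left hsum (by positivity : (0:ℝ) ≤ 2 * M),
        hKS, mul_nonneg hM0 hK0.le, mul_self_nonneg K]
    rw [sub_le_iff_le_add, div_mul_eq_mul_div, one_mul, div_le_iff₀ hK0]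
    nlinarith [key2]
end

section
/- For all real δ ≥ 0 and R ≥ 0 there exist h > 0 and K ≥ 0, depending only on δ and R, with the following property. Let Y be a geodesic metric space which is δ-hyperbolic and let x₀, x₁, …, xₙ (with n ≥ 1) be an (h,R)-chain in Y. Then for every geodesic σ from x₀ to xₙ, for every index 0 ≤ i < n and every geodesic γᵢ from xᵢ to xᵢ₊₁, every point of the image of γᵢ lies at distance at most K from the image of σ. In particular, every xᵢ (0 ≤ i ≤ n) lies at distance at most K from the image of every geodesic from x₀ to xₙ. -/
namespace ChainAux

variable {Y : Type*} [MetricSpace Y]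

/-- Gromov product of `a` and `b` at `w`. -/
noncomputable def gp (a b w : Y) : ℝ := (dist a w + dist b w - dist a b) / 2

lemma gp_comm (a b w : Y) : gp a b w = gp b a w := by
  unfold gp; rw [dist_comm a b]; ring

lemma gp_nonneg (a b w : Y) : 0 ≤ gp a b w := by
  unfold gp
  have := dist_triangle a w b
  have := dist_comm w b
  linarith

lemma gp_flip (a b w : Y) : gp a b w + gp a w b = dist b w := by
  unfold gp
  rw [dist_comm w b]
  ring

lemma gp_self (a w : Y) : gp a a w = dist a w := by
  simp [gp]

lemma gp_le (a b w : Y) : gp a b w ≤ dist a w := by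
  unfold gp
  have := dist_triangle b a w
  have := dist_comm b a
  linarith

/-- `t := gp b p a` is at most `dist a b`. -/
lemma gp_le' (a b p : Y) : gp b p a ≤ dist a b := by
  unfold gp
  have := dist_triangle p b a
  have h1 := dist_comm b a
  have h2 := dist_comm p a
  have h3 := dist_comm p b
  linarith

/-- The four-point condition in Gromov-product form. -/
lemma gp_hyp {δ : ℝ}
    (H : ∀ p q s t : Y,
      dist p q + dist s t ≤ max (dist p s + dist q t) (dist p t + dist q s) + 2 * δ) :
    ∀ a b c w : Y, min (gp a b w) (gp b c w) ≤ gp a c w + δ := by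
  intro a b c w
  have h := H a c b w
  unfold gp
  rcases le_total (dist a b + dist c w) (dist a w + dist c b) with hm | hm
  · rw [max_eq_right hm] at h
    have h1 := dist_comm c b
    have := min_le_right ((dist a w + dist b w - dist a b) / 2)
      ((dist b w + dist c w - dist b c) / 2)
    linarith
  · rw [max_eq_left hm] at h
    have := min_le_left ((dist a w + dist b w - dist a b) / 2)
      ((dist b w + dist c w - dist b c) / 2)
    linarith

/-- A point `q` on a geodesic from `a` to `b` at parameter `gp b p a` is within
`gp a b p + 2δ` of `p`. -/
lemma key {δ : ℝ}
    (hyp : ∀ a b c w : Y, min (gp a b w) (gp b c w) ≤ gp a c w + δ)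
    (a b p q : Y) (hq1 : dist a q = gp b p a) (hq2 : dist a q + dist q b = dist a b) :
    dist p q ≤ gp a b p + 2 * δ := by
  have hmin := hyp a q b p
  unfold gp at hmin hq1 ⊢
  have c1 := dist_comm p q
  have c2 := dist_comm a p
  have c3 := dist_comm b p
  have c4 := dist_comm a q
  have c5 := dist_comm q b
  have c6 := dist_comm a b
  rcases le_total ((dist a p + dist q p - dist a q) / 2)
      ((dist q p + dist b p - dist q b) / 2) with hle | hle
  · rw [min_eq_left hle] at hmin; linarith
  · rw [min_eq_right hle] at hmin; linarith

/-- Projection onto a geodesic: some point of the geodesic segment is within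
`gp (σ s₁) (σ s₂) p + 2δ` of `p`. -/
lemma cor {δ : ℝ}
    (hyp : ∀ a b c w : Y, min (gp a b w) (gp b c w) ≤ gp a c w + δ)
    {σ : ℝ → Y} {a0 b0 : Y} (hσ : IsGeodesicFrom σ a0 b0)
    {s₁ s₂ : ℝ} (h1 : s₁ ∈ Set.Icc 0 (dist a0 b0)) (h2 : s₂ ∈ Set.Icc 0 (dist a0 b0))
    (p : Y) :
    ∃ u ∈ Set.Icc (0:ℝ) (dist a0 b0), dist p (σ u) ≤ gp (σ s₁) (σ s₂) p + 2 * δ := by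
  obtain ⟨hσ0, hσD, hiso⟩ := hσ
  have hab : dist (σ s₁) (σ s₂) = |s₁ - s₂| := hiso s₁ h1 s₂ h2
  set t := gp (σ s₂) p (σ s₁) with hts
  have ht0 : 0 ≤ t := gp_nonneg _ _ _
  have htle : t ≤ dist (σ s₁) (σ s₂) := gp_le' _ _ _
  rcases le_total s₁ s₂ with hss | hss
  · have habs : |s₁ - s₂| = s₂ - s₁ := by
      rw [abs_sub_comm, abs_of_nonneg (by linarith)]
    have hu : s₁ + t ∈ Set.Icc (0:ℝ) (dist a0 b0) := by
      constructor
      · linarith [h1.1]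
      · have : t ≤ s₂ - s₁ := by rw [hab, habs] at htle; exact htle
        linarith [h2.2]
    refine ⟨s₁ + t, hu, ?_⟩
    have hd1 : dist (σ s₁) (σ (s₁ + t)) = t := by
      rw [hiso s₁ h1 (s₁ + t) hu]
      simp [abs_of_nonneg ht0]
    have hd2 : dist (σ (s₁ + t)) (σ s₂) = (s₂ - s₁) - t := by
      rw [hiso (s₁ + t) hu s₂ h2]
      have : t ≤ s₂ - s₁ := by rw [hab, habs] at htle; exact htle
      rw [abs_sub_comm, abs_of_nonneg (by linarith)]
      ring
    exact key hyp (σ s₁) (σ s₂) p (σ (s₁ + t)) (by rw [hd1, hts])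
      (by rw [hd1, hd2, hab, habs]; ring)
  · have habs : |s₁ - s₂| = s₁ - s₂ := abs_of_nonneg (by linarith)
    have hu : s₁ - t ∈ Set.Icc (0:ℝ) (dist a0 b0) := by
      constructor
      · have : t ≤ s₁ - s₂ := by rw [hab, habs] at htle; exact htle
        linarith [h2.1]
      · linarith [h1.2]
    refine ⟨s₁ - t, hu, ?_⟩
    have hd1 : dist (σ s₁) (σ (s₁ - t)) = t := by
      rw [hiso s₁ h1 (s₁ - t) hu]
      simp [abs_of_nonneg ht0]
    have hd2 : dist (σ (s₁ - t)) (σ s₂) = (s₁ - s₂) - t := by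
      rw [hiso (s₁ - t) hu s₂ h2]
      have : t ≤ s₁ - s₂ := by rw [hab, habs] at htle; exact htle
      rw [abs_of_nonneg (by linarith)]
      ring
    exact key hyp (σ s₁) (σ s₂) p (σ (s₁ - t)) (by rw [hd1, hts])
      (by rw [hd1, hd2, hab, habs]; ring)

/-- Lemma A: along a chain, `gp (x 0) (x (i+1)) (x i)` stays bounded. -/
lemma lemA {δ c h : ℝ} (hδ : 0 ≤ δ)
    (hyp : ∀ a b c' w : Y, min (gp a b w) (gp b c' w) ≤ gp a c' w + δ)
    (hh : 2 * c + 2 * δ < h) {n : ℕ} {x : ℕ → Y}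
    (hdist : ∀ i < n, h ≤ dist (x i) (x (i + 1)))
    (hchain : ∀ i, 0 < i → i < n → gp (x (i - 1)) (x (i + 1)) (x i) ≤ c) :
    ∀ i, 0 < i → i < n → gp (x 0) (x (i + 1)) (x i) ≤ c + δ := by
  intro i hi
  induction i, hi using Nat.le_induction with
  | base =>
    intro h1n
    have := hchain 1 one_pos h1n
    simp only [show (1:ℕ) - 1 = 0 from rfl] at this
    linarith
  | succ i hi IH =>
    intro hin
    have hiln : i < n := by omega
    have hIH := IH hiln
    have hB : h - (c + δ) ≤ gp (x 0) (x i) (x (i + 1)) := by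
      have hf := gp_flip (x 0) (x (i + 1)) (x i)
      have hd := hdist i hiln
      have hcm := dist_comm (x i) (x (i + 1))
      linarith
    have hC : gp (x i) (x (i + 2)) (x (i + 1)) ≤ c := by
      have := hchain (i + 1) (by omega) hin
      simpa using this
    have hmin := hyp (x (i + 2)) (x 0) (x i) (x (i + 1))
    rw [gp_comm (x (i + 2)) (x 0), gp_comm (x (i + 2)) (x i)] at hmin
    show gp (x 0) (x (i + 2)) (x (i + 1)) ≤ c + δ
    rcases le_total (gp (x 0) (x (i + 2)) (x (i + 1)))
        (gp (x 0) (x i) (x (i + 1))) with hle | hle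
    · rw [min_eq_left hle] at hmin; linarith
    · rw [min_eq_right hle] at hmin; linarith

/-- Lemma B: every chain point has bounded Gromov product of the endpoints. -/
lemma lemB {δ c h : ℝ} (hδ : 0 ≤ δ) (hc : 0 ≤ c)
    (hyp : ∀ a b c' w : Y, min (gp a b w) (gp b c' w) ≤ gp a c' w + δ)
    (hh : 2 * c + 3 * δ < h) {n : ℕ} {x : ℕ → Y}
    (hdist : ∀ i < n, h ≤ dist (x i) (x (i + 1)))
    (hchain : ∀ i, 0 < i → i < n → gp (x (i - 1)) (x (i + 1)) (x i) ≤ c) :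
    ∀ i ≤ n, gp (x 0) (x n) (x i) ≤ c + 2 * δ := by
  have hh2 : 2 * c + 2 * δ < h := by linarith
  -- the reversed chain
  set y : ℕ → Y := fun j => x (n - j) with hy
  have hdist' : ∀ j < n, h ≤ dist (y j) (y (j + 1)) := by
    intro j hj
    have e1 : n - j = (n - (j + 1)) + 1 := by omega
    have hd := hdist (n - (j + 1)) (by omega)
    simp only [hy]
    rw [e1, dist_comm]
    exact hd
  have hchain' : ∀ j, 0 < j → j < n → gp (y (j - 1)) (y (j + 1)) (y j) ≤ c := by
    intro j h0 hjn
    have e1 : n - (j - 1) = (n - j) + 1 := by omega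
    have e2 : n - (j + 1) = (n - j) - 1 := by omega
    simp only [hy]
    rw [e1, e2, gp_comm]
    exact hchain (n - j) (by omega) (by omega)
  have hArev : ∀ j, 0 < j → j < n → gp (x n) (x (j - 1)) (x j) ≤ c + δ := by
    intro j h0 hjn
    have := lemA hδ hyp hh2 hdist' hchain' (n - j) (by omega) (by omega)
    simp only [hy] at this
    rw [show n - 0 = n by omega, show n - (n - j + 1) = j - 1 by omega,
      show n - (n - j) = j by omega] at this
    exact this
  intro i hi
  rcases Nat.eq_zero_or_pos i with rfl | h0
  · have : gp (x 0) (x n) (x 0) = 0 := by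
      simp [gp, dist_self, dist_comm]
    linarith
  rcases eq_or_lt_of_le hi with rfl | hin
  · have : gp (x 0) (x i) (x i) = 0 := by
      simp [gp, dist_self]
    linarith
  -- now 0 < i < n
  have hA := lemA hδ hyp hh2 hdist hchain i h0 hin
  have hBB : c + 2 * δ < gp (x (i + 1)) (x n) (x i) := by
    rcases eq_or_lt_of_le (show i + 1 ≤ n by omega) with he | hlt
    · rw [← he, gp_self]
      have := hdist i hin
      have := dist_comm (x i) (x (i + 1))
      linarith
    · have hrev : gp (x n) (x i) (x (i + 1)) ≤ c + δ := by
        have := hArev (i + 1) (by omega) hlt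
        simpa using this
      have hf : gp (x n) (x i) (x (i + 1)) + gp (x n) (x (i + 1)) (x i)
          = dist (x i) (x (i + 1)) := gp_flip (x n) (x i) (x (i + 1))
      have hd := hdist i hin
      rw [gp_comm]
      linarith
  have hmin := hyp (x 0) (x n) (x (i + 1)) (x i)
  rw [gp_comm (x n) (x (i + 1))] at hmin
  rcases le_total (gp (x 0) (x n) (x i)) (gp (x (i + 1)) (x n) (x i)) with hle | hle
  · rw [min_eq_left hle] at hmin; linarith
  · rw [min_eq_right hle] at hmin; linarith

end ChainAux

open ChainAux

/-- every geodesic segment of an `(h,R)`-chain, and in particular every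
chain point, lies within distance `K` of any geodesic joining the endpoints of the chain. -/
theorem chain_fellow_travels_geodesic (δ R : ℝ) (hδ : 0 ≤ δ) (hR : 0 ≤ R) :
    ∃ h K : ℝ, 0 < h ∧ 0 ≤ K ∧
      ∀ (Y : Type) [inst : MetricSpace Y],
        IsGeodesicSpace Y → IsDeltaHyperbolic Y δ →
        ∀ (n : ℕ) (x : ℕ → Y), 1 ≤ n → IsHRChain h R n x →
          ∀ σ : ℝ → Y, IsGeodesicFrom σ (x 0) (x n) →
            (∀ i < n, ∀ γ : ℝ → Y, IsGeodesicFrom γ (x i) (x (i + 1)) →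
              ∀ t ∈ Set.Icc (0 : ℝ) (dist (x i) (x (i + 1))),
                Metric.infDist (γ t) (σ '' Set.Icc (0 : ℝ) (dist (x 0) (x n))) ≤ K) ∧
            (∀ i ≤ n,
              Metric.infDist (x i) (σ '' Set.Icc (0 : ℝ) (dist (x 0) (x n))) ≤ K) := by
  refine ⟨2 * R + 4 * δ + 1, 2 * R + 10 * δ, by linarith, by linarith, ?_⟩
  intro Y _ _hgeo hhyp n x hn hchain σ hσ
  have hyp : ∀ a b c w : Y, min (gp a b w) (gp b c w) ≤ gp a c w + δ :=
    gp_hyp hhyp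
  have hdist := hchain.1
  -- Gromov-product form of the chain condition
  have hc : ∀ i, 0 < i → i < n → gp (x (i - 1)) (x (i + 1)) (x i) ≤ R := by
    intro i h1 h2
    obtain ⟨γ, ⟨hγ0, hγD, hγiso⟩, s, hs, hsd⟩ := hchain.2 i h1 h2
    have hd1 : dist (x (i - 1)) (γ s) = s := by
      conv_lhs => rw [← hγ0]
      rw [hγiso 0 ⟨le_refl 0, dist_nonneg⟩ s hs]
      rw [zero_sub, abs_neg, abs_of_nonneg hs.1]
    have hd2 : dist (γ s) (x (i + 1)) = dist (x (i - 1)) (x (i + 1)) - s := by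
      conv_lhs => rw [← hγD]
      rw [hγiso s hs _ ⟨dist_nonneg, le_refl _⟩]
      rw [abs_of_nonpos (by linarith [hs.2])]
      ring
    have t1 := dist_triangle (x (i - 1)) (γ s) (x i)
    have t2 := dist_triangle (x (i + 1)) (γ s) (x i)
    have c1 := dist_comm (γ s) (x (i + 1))
    unfold gp
    linarith
  have hh2 : 2 * R + 3 * δ < 2 * R + 4 * δ + 1 := by linarith
  have hB := lemB hδ hR hyp hh2 hdist hc
  set D := dist (x 0) (x n) with hD
  have hDnn : (0 : ℝ) ≤ D := dist_nonneg
  have h0m : (0 : ℝ) ∈ Set.Icc (0 : ℝ) D := ⟨le_refl 0, hDnn⟩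
  have hDm : D ∈ Set.Icc (0 : ℝ) D := ⟨hDnn, le_refl D⟩
  -- distance from each chain point to the geodesic, with an explicit witness
  have hpt : ∀ i ≤ n, ∃ u ∈ Set.Icc (0 : ℝ) D, dist (x i) (σ u) ≤ R + 4 * δ := by
    intro i hi
    obtain ⟨u, hu, hdu⟩ := cor hyp hσ h0m hDm (x i)
    refine ⟨u, hu, ?_⟩
    rw [hσ.1, hσ.2.1] at hdu
    have := hB i hi
    linarith
  constructor
  · -- geodesic segments of the chain
    intro i hin γ hγ t ht
    obtain ⟨hγ0, hγD, hγiso⟩ := hγ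
    obtain ⟨u₁, hu₁, hd₁⟩ := hpt i (le_of_lt hin)
    obtain ⟨u₂, hu₂, hd₂⟩ := hpt (i + 1) hin
    -- distances from γ t to the endpoints
    have hg1 : dist (x i) (γ t) = t := by
      conv_lhs => rw [← hγ0]
      rw [hγiso 0 ⟨le_refl 0, dist_nonneg⟩ t ht, zero_sub, abs_neg, abs_of_nonneg ht.1]
    have hg2 : dist (γ t) (x (i + 1)) = dist (x i) (x (i + 1)) - t := by
      conv_lhs => rw [← hγD]
      rw [hγiso t ht _ ⟨dist_nonneg, le_refl _⟩, abs_of_nonpos (by linarith [ht.2])]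
      ring
    have hgp : gp (σ u₁) (σ u₂) (γ t) ≤ 2 * (R + 4 * δ) := by
      have t4 := dist_triangle4 (x i) (σ u₁) (σ u₂) (x (i + 1))
      have t1 := dist_triangle (σ u₁) (x i) (γ t)
      have t2 := dist_triangle (σ u₂) (x (i + 1)) (γ t)
      have c1 := dist_comm (x i) (σ u₁)
      have c2 := dist_comm (x (i + 1)) (σ u₂)
      have c3 := dist_comm (x i) (γ t)
      have c4 := dist_comm (x (i + 1)) (γ t)
      have c5 := dist_comm (σ u₂) (x (i + 1))
      unfold gp
      linarith
    obtain ⟨u₃, hu₃, hd₃⟩ := cor hyp hσ hu₁ hu₂ (γ t)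
    have hmem : σ u₃ ∈ σ '' Set.Icc (0 : ℝ) D := ⟨u₃, hu₃, rfl⟩
    have := Metric.infDist_le_dist_of_mem (x := γ t) hmem
    linarith
  · -- chain points
    intro i hi
    obtain ⟨u, hu, hdu⟩ := hpt i hi
    have hmem : σ u ∈ σ '' Set.Icc (0 : ℝ) D := ⟨u, hu, rfl⟩
    have := Metric.infDist_le_dist_of_mem (x := x i) hmem
    linarith
end

section
/- For all real δ ≥ 0 and R ≥ 0 there exist h > 0 and K ≥ 1, depending only on δ and R, with the following property. Let Y be a geodesic metric space which is δ-hyperbolic, let x₀, x₁, …, xₙ (with n ≥ 1) be an (h,R)-chain in Y, set T₀ = 0 and Tᵢ = ∑_{l=0}^{i−1} dist x_l x_{l+1} for 1 ≤ i ≤ n, and let γ : [0, Tₙ] → Y be any map whose restriction to each subinterval [Tᵢ, Tᵢ₊₁] is (after translating the parameter by Tᵢ) a geodesic from xᵢ to xᵢ₊₁. Then γ is a K-quasigeodesic: for all s, t ∈ [0, Tₙ], (1/K)·|s − t| − K ≤ dist (γ s) (γ t) ≤ |s − t|. -/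
/-- The partial sums `T i = ∑_{l < i} dist (x l) (x (l+1))` of consecutive distances. -/
noncomputable def chainTime {Y : Type*} [MetricSpace Y] (x : ℕ → Y) (i : ℕ) : ℝ :=
  ∑ l ∈ Finset.range i, dist (x l) (x (l + 1))

section Aux
variable {Y : Type} [MetricSpace Y]

lemma gromov4 {δ : ℝ} (hyp : IsDeltaHyperbolic Y δ) (w p q r : Y) :
    min (dist p w + dist r w - dist p r) (dist r w + dist q w - dist r q)
      ≤ dist p w + dist q w - dist p q + 2 * δ := by
  have H := hyp p q r w
  have hc := dist_comm q r
  rcases max_cases (dist p r + dist q w) (dist p w + dist q r) with ⟨h1, _⟩ | ⟨h1, _⟩ <;>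
    rw [h1] at H
  · exact le_trans (min_le_left _ _) (by linarith)
  · exact le_trans (min_le_right _ _) (by linarith)

lemma coreChain {δ C H : ℝ} (hδ : 0 ≤ δ) (hC : 0 ≤ C) (hH : H = 2*(C+δ)+1)
    (hyp : IsDeltaHyperbolic Y δ) (m : ℕ) (y : ℕ → Y)
    (hedge : ∀ i < m, H ≤ dist (y i) (y (i+1)))
    (hprod : ∀ i, 0 < i → i < m →
      dist (y (i-1)) (y i) + dist (y (i+1)) (y i) - dist (y (i-1)) (y (i+1)) ≤ 2*C) :
    ∑ l ∈ Finset.range m, dist (y l) (y (l+1)) ≤ H * dist (y 0) (y m) := by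
  rcases Nat.eq_zero_or_pos m with rfl | hm
  · simp
  have key : ∀ i, 1 ≤ i → i < m →
      dist (y 0) (y i) + dist (y (i+1)) (y i) - dist (y 0) (y (i+1)) ≤ 2*(C+δ) := by
    intro i hi
    induction i, hi using Nat.le_induction with
    | base =>
      intro h1m
      have h0 := hprod 1 one_pos h1m
      norm_num at h0
      linarith
    | succ i hi IH =>
      intro him
      have hilt : i < m := Nat.lt_of_succ_lt him
      have IH' := IH hilt
      have hd := hedge i hilt
      have hp := hprod (i+1) (Nat.succ_pos _) him
      simp only [Nat.add_sub_cancel] at hp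
      have hg := gromov4 hyp (y (i+1)) (y i) (y (i+2)) (y 0)
      have hc1 := dist_comm (y i) (y 0)
      have hc2 := dist_comm (y (i+1)) (y i)
      rcases le_or_gt (dist (y i) (y (i+1)) + dist (y 0) (y (i+1)) - dist (y i) (y 0))
          (dist (y 0) (y (i+1)) + dist (y (i+2)) (y (i+1)) - dist (y 0) (y (i+2))) with hmin | hmin
      · rw [min_eq_left hmin] at hg
        linarith
      · rw [min_eq_right hmin.le] at hg
        linarith
  have sumb : ∀ i, 1 ≤ i → i ≤ m →
      ∑ l ∈ Finset.range i, dist (y l) (y (l+1))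
        ≤ dist (y 0) (y i) + 2*(C+δ) * ((i:ℝ) - 1) := by
    intro i hi
    induction i, hi using Nat.le_induction with
    | base =>
      intro _
      rw [Finset.sum_range_one]
      norm_num
    | succ i hi IH =>
      intro him
      have hilt : i < m := him
      have IH' := IH (le_of_lt hilt)
      have hk := key i hi hilt
      rw [Finset.sum_range_succ]
      push_cast
      have hc := dist_comm (y i) (y (i+1))
      linarith
  have hedgesum : (m:ℝ) * H ≤ ∑ l ∈ Finset.range m, dist (y l) (y (l+1)) := by
    calc (m:ℝ)*H = ∑ _l ∈ Finset.range m, H := by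
          rw [Finset.sum_const, Finset.card_range, nsmul_eq_mul]
    _ ≤ _ := Finset.sum_le_sum fun i hi => hedge i (Finset.mem_range.mp hi)
  have hS := sumb m hm le_rfl
  have hd0 : (0:ℝ) ≤ dist (y 0) (y m) := dist_nonneg
  have hm1 : (1:ℝ) ≤ (m:ℝ) := by exact_mod_cast hm
  have hH1 : (1:ℝ) ≤ H := by linarith
  have hE : 2*(C+δ) = H - 1 := by linarith
  rw [hE] at hS
  nlinarith [mul_le_mul_of_nonneg_left hS (by linarith : (0:ℝ) ≤ H),
    mul_le_mul_of_nonneg_right hedgesum (by linarith : (0:ℝ) ≤ H - 1),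
    mul_nonneg (by linarith : (0:ℝ) ≤ H) (by linarith : (0:ℝ) ≤ H - 1)]

end Aux

set_option maxHeartbeats 1600000 in
/-- the concatenation of the geodesic segments of an `(h,R)`-chain,
parametrized by arclength, is a `K`-quasigeodesic. -/
theorem chain_concatenation_quasigeodesic (δ R : ℝ) (hδ : 0 ≤ δ) (hR : 0 ≤ R) :
    ∃ h K : ℝ, 0 < h ∧ 1 ≤ K ∧
      ∀ (Y : Type) [inst : MetricSpace Y],
        IsGeodesicSpace Y → IsDeltaHyperbolic Y δ →
        ∀ (n : ℕ) (x : ℕ → Y), 1 ≤ n → IsHRChain h R n x →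
          ∀ γ : ℝ → Y,
            (∀ i < n,
              IsGeodesicFrom (fun s => γ (chainTime x i + s)) (x i) (x (i + 1))) →
            ∀ s ∈ Set.Icc (0 : ℝ) (chainTime x n),
              ∀ t ∈ Set.Icc (0 : ℝ) (chainTime x n),
                (1 / K) * |s - t| - K ≤ dist (γ s) (γ t) ∧
                  dist (γ s) (γ t) ≤ |s - t| := by
  classical
  set C : ℝ := R + 2*δ with hCdef
  set H : ℝ := 2*(C+δ) + 1 with hHdef
  have hC : 0 ≤ C := by rw [hCdef]; linarith
  have hH1 : (1:ℝ) ≤ H := by rw [hHdef]; linarith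
  have hHpos : (0:ℝ) < H := by linarith
  refine ⟨H, 8*H, hHpos, by linarith, ?_⟩
  intro Y instY _hgeo hhyp n x hn hchain γ hγ
  set T : ℕ → ℝ := chainTime x with hTdef
  have Tsucc : ∀ k, T (k+1) = T k + dist (x k) (x (k+1)) := fun k =>
    Finset.sum_range_succ _ k
  have T0 : T 0 = 0 := Finset.sum_range_zero _
  have Tmono : ∀ {a b : ℕ}, a ≤ b → T a ≤ T b := by
    intro a b hab
    exact Finset.sum_le_sum_of_subset_of_nonneg (Finset.range_subset_range.mpr hab)
      (fun i _ _ => dist_nonneg)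
  have Tnonneg : ∀ k, 0 ≤ T k := by
    intro k
    have := Tmono (Nat.zero_le k)
    rwa [T0] at this
  have hedge : ∀ k < n, H ≤ dist (x k) (x (k+1)) := hchain.1
  -- segment isometry
  have seg_iso : ∀ k, k < n → ∀ u v, T k ≤ u → u ≤ T (k+1) → T k ≤ v → v ≤ T (k+1) →
      dist (γ u) (γ v) = |u - v| := by
    intro k hk u v hu1 hu2 hv1 hv2
    have hTs := Tsucc k
    have hiso := (hγ k hk).2.2
    have h1 : u - T k ∈ Set.Icc (0:ℝ) (dist (x k) (x (k+1))) := ⟨by linarith, by linarith⟩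
    have h2 : v - T k ∈ Set.Icc (0:ℝ) (dist (x k) (x (k+1))) := ⟨by linarith, by linarith⟩
    have h4 : dist (γ (T k + (u - T k))) (γ (T k + (v - T k))) = |u - T k - (v - T k)| :=
      hiso _ h1 _ h2
    rw [show T k + (u - T k) = u by ring, show T k + (v - T k) = v by ring] at h4
    rw [h4]
    congr 1
    ring
  have gammaT : ∀ k, k ≤ n → γ (T k) = x k := by
    intro k hk
    rcases lt_or_eq_of_le hk with hk' | heq
    · have h0 : γ (T k + 0) = x k := (hγ k hk').1
      rwa [add_zero] at h0
    · obtain ⟨n', hn'⟩ : ∃ n', n = n' + 1 := ⟨n - 1, by omega⟩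
      subst hn'
      subst heq
      have h1 : γ (T n' + dist (x n') (x (n'+1))) = x (n'+1) :=
        (hγ n' (Nat.lt_succ_self n')).2.1
      rwa [← Tsucc n'] at h1
  -- pure chain Gromov product bound
  have pureprod : ∀ k, 0 < k → k < n →
      dist (x (k-1)) (x k) + dist (x (k+1)) (x k) - dist (x (k-1)) (x (k+1)) ≤ 2*R := by
    intro k hk1 hk2
    obtain ⟨g, ⟨g0, g1, giso⟩, u, hu, hclose⟩ := hchain.2 k hk1 hk2
    have hD0 : (0:ℝ) ≤ dist (x (k-1)) (x (k+1)) := dist_nonneg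
    have e1 : dist (g 0) (g u) = |0 - u| := giso 0 ⟨le_rfl, hD0⟩ u hu
    have e2 : dist (g u) (g (dist (x (k-1)) (x (k+1)))) = |u - dist (x (k-1)) (x (k+1))| :=
      giso u hu _ ⟨hD0, le_rfl⟩
    rw [g0] at e1
    rw [g1] at e2
    rw [zero_sub, abs_neg, abs_of_nonneg hu.1] at e1
    rw [abs_sub_comm, abs_of_nonneg (by linarith [hu.2])] at e2
    have t1 : dist (x (k-1)) (x k) ≤ u + R := by
      have := dist_triangle (x (k-1)) (g u) (x k)
      linarith
    have t2 : dist (x (k+1)) (x k) ≤ (dist (x (k-1)) (x (k+1)) - u) + R := by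
      have h5 := dist_triangle (x (k+1)) (g u) (x k)
      have h6 : dist (x (k+1)) (g u) = dist (x (k-1)) (x (k+1)) - u := by
        rw [dist_comm]; exact e2
      linarith
    linarith
  -- one-sided products with a point on a geodesic segment
  have prodA : ∀ (a : ℕ) (p : ℝ), a + 2 ≤ n → T a ≤ p → p ≤ T (a+1) → H ≤ T (a+1) - p →
      dist (γ p) (x (a+1)) + dist (x (a+2)) (x (a+1)) - dist (γ p) (x (a+2)) ≤ 2*(R+δ) := by
    intro a p han hp1 hp2 hplong
    have ha'n : a < n := by omega
    have dpa1 : dist (γ p) (x (a+1)) = T (a+1) - p := by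
      rw [← gammaT (a+1) (by omega),
        seg_iso a ha'n p (T (a+1)) hp1 hp2 (Tmono (Nat.le_succ a)) le_rfl,
        abs_sub_comm, abs_of_nonneg (by linarith)]
    have dpa0 : dist (x a) (γ p) = p - T a := by
      rw [← gammaT a (by omega),
        seg_iso a ha'n (T a) p le_rfl (Tmono (Nat.le_succ a)) hp1 hp2,
        abs_sub_comm, abs_of_nonneg (by linarith)]
    have hpure := pureprod (a+1) (by omega) (by omega)
    simp only [Nat.add_sub_cancel] at hpure
    have hg := gromov4 hhyp (x (a+1)) (x a) (x (a+2)) (γ p)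
    have hTs := Tsucc a
    rcases le_or_gt (dist (x a) (x (a+1)) + dist (γ p) (x (a+1)) - dist (x a) (γ p))
        (dist (γ p) (x (a+1)) + dist (x (a+2)) (x (a+1)) - dist (γ p) (x (a+2))) with hc | hc
    · rw [min_eq_left hc] at hg
      linarith
    · rw [min_eq_right hc.le] at hg
      linarith
  have prodB : ∀ (c : ℕ) (q : ℝ), 0 < c → c + 1 ≤ n → T c ≤ q → q ≤ T (c+1) → H ≤ q - T c →
      dist (x (c-1)) (x c) + dist (γ q) (x c) - dist (x (c-1)) (γ q) ≤ 2*(R+δ) := by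
    intro c q hc0 hcn hq1 hq2 hqlong
    have hcn' : c < n := by omega
    have dq0 : dist (γ q) (x c) = q - T c := by
      rw [← gammaT c (by omega),
        seg_iso c hcn' q (T c) hq1 hq2 le_rfl (Tmono (Nat.le_succ c)),
        abs_of_nonneg (by linarith)]
    have dq1 : dist (γ q) (x (c+1)) = T (c+1) - q := by
      rw [← gammaT (c+1) (by omega),
        seg_iso c hcn' q (T (c+1)) hq1 hq2 (Tmono (Nat.le_succ c)) le_rfl,
        abs_sub_comm, abs_of_nonneg (by linarith)]
    have hpure := pureprod c hc0 hcn'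
    have hg := gromov4 hhyp (x c) (x (c-1)) (x (c+1)) (γ q)
    have hTs := Tsucc c
    have hcc := dist_comm (x c) (x (c+1))
    rcases le_or_gt (dist (x (c-1)) (x c) + dist (γ q) (x c) - dist (x (c-1)) (γ q))
        (dist (γ q) (x c) + dist (x (c+1)) (x c) - dist (γ q) (x (c+1))) with hc2 | hc2
    · rw [min_eq_left hc2] at hg
      linarith
    · rw [min_eq_right hc2.le] at hg
      linarith
  have prodC : ∀ (a : ℕ) (p q : ℝ), a + 2 ≤ n → T a ≤ p → p ≤ T (a+1) → H ≤ T (a+1) - p →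
      T (a+1) ≤ q → q ≤ T (a+2) → H ≤ q - T (a+1) →
      dist (γ p) (x (a+1)) + dist (γ q) (x (a+1)) - dist (γ p) (γ q) ≤ 2*C := by
    intro a p q han hp1 hp2 hplong hq1 hq2 hqlong
    have ha'n : a < n := by omega
    have hB := prodB (a+1) q (by omega) (by omega) hq1 hq2 hqlong
    simp only [Nat.add_sub_cancel] at hB
    have dpa1 : dist (γ p) (x (a+1)) = T (a+1) - p := by
      rw [← gammaT (a+1) (by omega),
        seg_iso a ha'n p (T (a+1)) hp1 hp2 (Tmono (Nat.le_succ a)) le_rfl,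
        abs_sub_comm, abs_of_nonneg (by linarith)]
    have dpa0 : dist (x a) (γ p) = p - T a := by
      rw [← gammaT a (by omega),
        seg_iso a ha'n (T a) p le_rfl (Tmono (Nat.le_succ a)) hp1 hp2,
        abs_sub_comm, abs_of_nonneg (by linarith)]
    have hg := gromov4 hhyp (x (a+1)) (x a) (γ q) (γ p)
    have hTs := Tsucc a
    rcases le_or_gt (dist (x a) (x (a+1)) + dist (γ p) (x (a+1)) - dist (x a) (γ p))
        (dist (γ p) (x (a+1)) + dist (γ q) (x (a+1)) - dist (γ p) (γ q)) with hc2 | hc2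
    · rw [min_eq_left hc2] at hg
      rw [hCdef]
      linarith
    · rw [min_eq_right hc2.le] at hg
      rw [hCdef]
      linarith
  -- telescoping upper bound along chain times
  have MID : ∀ (a c : ℕ), a ≤ c → c ≤ n → dist (γ (T a)) (γ (T c)) ≤ T c - T a := by
    intro a c hac
    induction c, hac using Nat.le_induction with
    | base => intro _; rw [dist_self]; linarith
    | succ c hc IH =>
      intro hcn
      have hcltn : c < n := by omega
      have step : dist (γ (T c)) (γ (T (c+1))) = T (c+1) - T c := by
        rw [seg_iso c hcltn (T c) (T (c+1)) le_rfl (Tmono (Nat.le_succ c))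
          (Tmono (Nat.le_succ c)) le_rfl, abs_sub_comm,
          abs_of_nonneg (by linarith [Tmono (Nat.le_succ c)])]
      have htri := dist_triangle (γ (T a)) (γ (T c)) (γ (T (c+1)))
      have hIH := IH (by omega)
      linarith
  -- segment locator
  set segf : ℝ → ℕ := fun u => Nat.findGreatest (fun k => T k ≤ u) (n-1) with hsegf
  have seg_le : ∀ u, segf u ≤ n - 1 := fun u => Nat.findGreatest_le _
  have seg_lt_n : ∀ u, segf u < n := by intro u; have := seg_le u; omega
  have seg_spec : ∀ u, 0 ≤ u → T (segf u) ≤ u := by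
    intro u hu
    have hP0 : T 0 ≤ u := by rw [T0]; exact hu
    exact Nat.findGreatest_spec (P := fun k => T k ≤ u) (Nat.zero_le _) hP0
  have seg_succ : ∀ u, 0 ≤ u → u ≤ T n → u ≤ T (segf u + 1) := by
    intro u hu hun
    rcases lt_or_ge (segf u) (n-1) with hlt | hge
    · have hng := Nat.findGreatest_is_greatest (P := fun k => T k ≤ u)
        (Nat.lt_succ_self (segf u)) (by omega)
      exact (not_le.mp hng).le
    · have heq : segf u + 1 = n := by have := seg_le u; omega
      rw [heq]; exact hun
  have seg_mono : ∀ {u v : ℝ}, u ≤ v → segf u ≤ segf v := by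
    intro u v huv
    exact Nat.findGreatest_mono (fun k hk => le_trans hk huv) le_rfl
  -- global upper bound
  have UB : ∀ u v, 0 ≤ u → u ≤ v → v ≤ T n → dist (γ u) (γ v) ≤ v - u := by
    intro u v hu huv hv
    have hu2 : u ≤ T n := le_trans huv hv
    have hv0 : 0 ≤ v := le_trans hu huv
    have hac : segf u ≤ segf v := seg_mono huv
    have ha1 : T (segf u) ≤ u := seg_spec u hu
    have ha2 : u ≤ T (segf u + 1) := seg_succ u hu hu2
    have hc1 : T (segf v) ≤ v := seg_spec v hv0
    have hc2 : v ≤ T (segf v + 1) := seg_succ v hv0 hv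
    have haltn : segf u < n := seg_lt_n u
    have hcltn : segf v < n := seg_lt_n v
    rcases eq_or_lt_of_le hac with heq | hlt
    · have hv1' : T (segf u) ≤ v := by rw [heq]; exact hc1
      have hv2' : v ≤ T (segf u + 1) := by rw [heq]; exact hc2
      have e := seg_iso (segf u) haltn u v ha1 ha2 hv1' hv2'
      rw [e, abs_sub_comm, abs_of_nonneg (by linarith)]
    · have h1 : dist (γ u) (γ (T (segf u + 1))) = T (segf u + 1) - u := by
        rw [seg_iso (segf u) haltn u (T (segf u + 1)) ha1 ha2 (Tmono (Nat.le_succ _)) le_rfl,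
          abs_sub_comm, abs_of_nonneg (by linarith)]
      have h2 := MID (segf u + 1) (segf v) hlt (by omega)
      have h3 : dist (γ (T (segf v))) (γ v) = v - T (segf v) := by
        rw [seg_iso (segf v) hcltn (T (segf v)) v le_rfl (Tmono (Nat.le_succ _)) hc1 hc2,
          abs_sub_comm, abs_of_nonneg (by linarith)]
      have h4 := dist_triangle4 (γ u) (γ (T (segf u + 1))) (γ (T (segf v))) (γ v)
      have h5 : T (segf u + 1) ≤ T (segf v) := Tmono hlt
      linarith
  -- the key lower bound via the core chain lemma
  have KEY : ∀ (a e : ℕ) (p q : ℝ), a ≤ e → e ≤ n →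
      T a ≤ p → p ≤ T (a+1) → (p = T a ∨ H ≤ T (a+1) - p) →
      T (e-1) ≤ q → q ≤ T e → (q = T e ∨ H ≤ q - T (e-1)) →
      (a + 1 = e → p = T a ∨ q = T e) →
      (a = e → p = T a ∧ q = T e) →
      q - p ≤ H * dist (γ p) (γ q) := by
    intro a e p q hae hen hp1 hp2 hpd hq1 hq2 hqd hdeg1 hdeg0
    rcases eq_or_lt_of_le hae with heq | hlt
    · obtain ⟨hp', hq'⟩ := hdeg0 heq
      rw [hp', hq', heq]
      simp
    · set m : ℕ := e - a with hm
      have ham : a + m = e := by omega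
      have hm1 : 1 ≤ m := by omega
      set u : ℕ → ℝ := fun k => if k = 0 then p else if a + k = e then q else T (a+k) with hu
      have hu0 : u 0 = p := by simp [hu]
      have hum : u m = q := by
        have hmne : ¬ m = 0 := by omega
        simp only [hu]
        rw [if_neg hmne, if_pos ham]
      have edgeFacts : ∀ k < m, T (a+k) ≤ u k ∧ u (k+1) ≤ T (a+k+1) ∧ H ≤ u (k+1) - u k := by
        intro k hk
        by_cases hk0 : k = 0
        · subst hk0
          simp only [Nat.add_zero, Nat.zero_add]
          by_cases h1e : a + 1 = e
          · have h01 : u 1 = q := by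
              simp only [hu]
              rw [if_neg one_ne_zero, if_pos h1e]
            rw [hu0, h01]
            refine ⟨hp1, by rw [h1e]; exact hq2, ?_⟩
            rcases hdeg1 h1e with hpT | hqT
            · rcases hqd with hqT | hqlong
              · rw [hpT, hqT, ← h1e]
                have := hedge a (by omega)
                have := Tsucc a
                linarith
              · have he1 : e - 1 = a := by omega
                rw [he1] at hqlong
                rw [hpT]
                linarith
            · rcases hpd with hpT | hplong
              · rw [hpT, hqT, ← h1e]
                have := hedge a (by omega)
                have := Tsucc a
                linarith
              · rw [hqT, ← h1e]
                exact hplong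
          · have h01 : u 1 = T (a+1) := by
              simp only [hu]
              rw [if_neg one_ne_zero, if_neg h1e]
            rw [hu0, h01]
            refine ⟨hp1, le_rfl, ?_⟩
            rcases hpd with hpT | hplong
            · rw [hpT]
              have := hedge a (by omega)
              have := Tsucc a
              linarith
            · exact hplong
        · have hklt : a + k < e := by omega
          have huk : u k = T (a+k) := by
            simp only [hu]
            rw [if_neg hk0, if_neg (show ¬ a + k = e by omega)]
          by_cases hke : a + k + 1 = e
          · have huk1 : u (k+1) = q := by
              simp only [hu]
              rw [if_neg (Nat.succ_ne_zero k), if_pos (show a + (k+1) = e by omega)]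
            rw [huk, huk1]
            have he1 : e - 1 = a + k := by omega
            refine ⟨le_rfl, by rw [hke]; exact hq2, ?_⟩
            rcases hqd with hqT | hqlong
            · rw [hqT, ← hke]
              have := hedge (a+k) (by omega)
              have := Tsucc (a+k)
              linarith
            · rw [← he1]
              exact hqlong
          · have huk1 : u (k+1) = T (a+k+1) := by
              simp only [hu]
              rw [if_neg (Nat.succ_ne_zero k), if_neg (show ¬ a + (k+1) = e by omega)]
              rfl
            rw [huk, huk1]
            have := hedge (a+k) (by omega)
            have := Tsucc (a+k)
            exact ⟨le_rfl, le_rfl, by linarith⟩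
      have edist : ∀ k < m, dist (γ (u k)) (γ (u (k+1))) = u (k+1) - u k := by
        intro k hk
        obtain ⟨h1, h2, h3⟩ := edgeFacts k hk
        have hkn : a + k < n := by omega
        rw [seg_iso (a+k) hkn (u k) (u (k+1)) h1 (by linarith) (by linarith) h2,
          abs_sub_comm, abs_of_nonneg (by linarith)]
      have edges : ∀ k < m, H ≤ dist (γ (u k)) (γ (u (k+1))) := by
        intro k hk
        rw [edist k hk]
        exact (edgeFacts k hk).2.2
      have prods : ∀ k, 0 < k → k < m →
          dist (γ (u (k-1))) (γ (u k)) + dist (γ (u (k+1))) (γ (u k))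
            - dist (γ (u (k-1))) (γ (u (k+1))) ≤ 2*C := by
        intro k hk0 hkm
        have hklt : a + k < e := by omega
        have huk : u k = T (a+k) := by
          simp only [hu]
          rw [if_neg (show ¬ k = 0 by omega), if_neg (show ¬ a + k = e by omega)]
        have hgk : γ (u k) = x (a+k) := by rw [huk]; exact gammaT _ (by omega)
        have hPrev : (γ (u (k-1)) = x (a + k - 1)) ∨ (k = 1 ∧ H ≤ T (a+1) - p) := by
          by_cases hk1 : k = 1
          · rcases hpd with hpT | hplong
            · left
              subst hk1
              rw [show (1:ℕ) - 1 = 0 from rfl, hu0, hpT,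
                show a + 1 - 1 = a from rfl]
              exact gammaT a (by omega)
            · right; exact ⟨hk1, hplong⟩
          · left
            have hkk : u (k-1) = T (a + (k-1)) := by
              simp only [hu]
              rw [if_neg (show ¬ k - 1 = 0 by omega), if_neg (show ¬ a + (k-1) = e by omega)]
            rw [hkk, show a + (k-1) = a + k - 1 from by omega]
            exact gammaT _ (by omega)
        have hNext : (γ (u (k+1)) = x (a + k + 1)) ∨
            (a + k + 1 = e ∧ γ (u (k+1)) = γ q ∧ H ≤ q - T (e-1)) := by
          by_cases hke : a + k + 1 = e
          · rcases hqd with hqT | hqlong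
            · left
              have hqq : u (k+1) = q := by
                simp only [hu]
                rw [if_neg (Nat.succ_ne_zero k), if_pos (show a + (k+1) = e by omega)]
              rw [hqq, hqT, gammaT e hen]
              exact (congrArg x hke).symm
            · right
              refine ⟨hke, ?_, hqlong⟩
              have hqq : u (k+1) = q := by
                simp only [hu]
                rw [if_neg (Nat.succ_ne_zero k), if_pos (show a + (k+1) = e by omega)]
              rw [hqq]
          · left
            have hqq : u (k+1) = T (a+k+1) := by
              simp only [hu]
              rw [if_neg (Nat.succ_ne_zero k), if_neg (show ¬ a + (k+1) = e by omega)]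
              rfl
            rw [hqq]
            exact gammaT _ (by omega)
        rcases hPrev with hP | ⟨hk1, hplong⟩ <;> rcases hNext with hN | ⟨hke, hNq, hqlong⟩
        · -- pure
          rw [hgk, hP, hN]
          have := pureprod (a+k) (by omega) (by omega)
          rw [hCdef]
          linarith
        · -- pure prev, γ q next
          rw [hgk, hP, hNq]
          have he1 : e - 1 = a + k := by omega
          have hB := prodB (a+k) q (by omega) (by omega)
            (by rw [← he1]; exact hq1) (by rw [hke]; exact hq2) (by rw [← he1]; exact hqlong)
          rw [hCdef]
          linarith
        · -- γ p prev, pure next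
          subst hk1
          rw [show (1:ℕ) - 1 = 0 from rfl, hgk, hu0, hN]
          have hA := prodA a p (by omega) hp1 hp2 hplong
          rw [hCdef]
          linarith
        · -- γ p prev, γ q next
          subst hk1
          rw [show (1:ℕ) - 1 = 0 from rfl, hgk, hu0, hNq]
          have he1 : e - 1 = a + 1 := by omega
          have hC2 := prodC a p q (by omega) hp1 hp2 hplong
            (by rw [← he1]; exact hq1) (by rw [show a + 2 = e from by omega]; exact hq2)
            (by rw [← he1]; exact hqlong)
          linarith
      have hcore := coreChain hδ hC hHdef hhyp m (fun k => γ (u k)) edges prods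
      calc q - p = ∑ k ∈ Finset.range m, (u (k+1) - u k) := by
            rw [Finset.sum_range_sub, hu0, hum]
      _ = ∑ k ∈ Finset.range m, dist (γ (u k)) (γ (u (k+1))) :=
            Finset.sum_congr rfl (fun k hk => (edist k (Finset.mem_range.mp hk)).symm)
      _ ≤ H * dist (γ (u 0)) (γ (u m)) := hcore
      _ = H * dist (γ p) (γ q) := by rw [hu0, hum]
  -- main lower bound
  have MAIN : ∀ s t, 0 ≤ s → s ≤ t → t ≤ T n → (t - s)/H - 4*H ≤ dist (γ s) (γ t) := by
    intro s t hs0 hst htn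
    have hs2 : s ≤ T n := le_trans hst htn
    have ht0 : 0 ≤ t := le_trans hs0 hst
    have hTis : T (segf s) ≤ s := seg_spec s hs0
    have hsTi1 : s ≤ T (segf s + 1) := seg_succ s hs0 hs2
    have hTjt : T (segf t) ≤ t := seg_spec t ht0
    have htTj1 : t ≤ T (segf t + 1) := seg_succ t ht0 htn
    have hiltn : segf s < n := seg_lt_n s
    have hjltn : segf t < n := seg_lt_n t
    rcases eq_or_lt_of_le (seg_mono hst) with heq | hij
    · -- same segment
      have h1' : T (segf s) ≤ t := by rw [heq]; exact hTjt
      have h2' : t ≤ T (segf s + 1) := by rw [heq]; exact htTj1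
      have e := seg_iso (segf s) hiltn s t hTis hsTi1 h1' h2'
      rw [e, abs_sub_comm, abs_of_nonneg (by linarith)]
      have hdiv : (t - s)/H ≤ t - s := div_le_self (by linarith) hH1
      linarith
    · -- different segments
      have FIN : ∀ p q : ℝ, s ≤ p → p - s ≤ H → p ≤ T n → 0 ≤ q → q ≤ t → t - q ≤ H →
          q - p ≤ H * dist (γ p) (γ q) → (t - s)/H - 4*H ≤ dist (γ s) (γ t) := by
        intro p q hsp hpsH hpn hq0 hqt htqH hk
        have b1 : dist (γ p) (γ s) ≤ p - s := by rw [dist_comm]; exact UB s p hs0 hsp hpn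
        have b2 : dist (γ t) (γ q) ≤ t - q := by rw [dist_comm]; exact UB q t hq0 hqt htn
        have h4 := dist_triangle4 (γ p) (γ s) (γ t) (γ q)
        have hd5 : dist (γ p) (γ q) ≤ (p - s) + dist (γ s) (γ t) + (t - q) := by linarith
        have hD : (0:ℝ) ≤ dist (γ s) (γ t) := dist_nonneg
        rw [sub_le_iff_le_add, div_le_iff₀ hHpos]
        nlinarith [mul_le_mul_of_nonneg_left hd5 hHpos.le,
          mul_le_mul_of_nonneg_left hpsH hHpos.le,
          mul_le_mul_of_nonneg_left htqH hHpos.le,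
          mul_le_mul_of_nonneg_left hH1 hHpos.le]
      by_cases L1 : H ≤ T (segf s + 1) - s <;> by_cases L2 : H ≤ t - T (segf t)
      · -- long, long : a := segf s, e := segf t + 1, p := s, q := t
        have hk := KEY (segf s) (segf t + 1) s t (by omega) (by omega)
          hTis hsTi1 (Or.inr L1) hTjt htTj1 (Or.inr L2)
          (fun hcon => absurd hcon (by omega)) (fun hcon => absurd hcon (by omega))
        exact FIN s t le_rfl (by linarith) hs2 ht0 le_rfl (by linarith) hk
      · -- long, short : e := segf t, q := T (segf t)
        have hk := KEY (segf s) (segf t) s (T (segf t)) (by omega) (by omega)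
          hTis hsTi1 (Or.inr L1) (Tmono (Nat.sub_le _ _)) le_rfl (Or.inl rfl)
          (fun _ => Or.inr rfl) (fun hcon => absurd hcon (by omega))
        exact FIN s (T (segf t)) le_rfl (by linarith) hs2 (Tnonneg _) hTjt
          (by linarith [not_le.mp L2]) hk
      · -- short, long : a := segf s + 1, p := T (segf s + 1)
        have hk := KEY (segf s + 1) (segf t + 1) (T (segf s + 1)) t (by omega) (by omega)
          le_rfl (Tmono (Nat.le_succ _)) (Or.inl rfl) hTjt htTj1 (Or.inr L2)
          (fun _ => Or.inl rfl) (fun hcon => absurd hcon (by omega))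
        exact FIN (T (segf s + 1)) t hsTi1 (by linarith [not_le.mp L1])
          (Tmono (by omega)) ht0 le_rfl (by linarith) hk
      · -- short, short
        have hk := KEY (segf s + 1) (segf t) (T (segf s + 1)) (T (segf t)) (by omega) (by omega)
          le_rfl (Tmono (Nat.le_succ _)) (Or.inl rfl) (Tmono (Nat.sub_le _ _)) le_rfl
          (Or.inl rfl) (fun _ => Or.inl rfl) (fun _ => ⟨rfl, rfl⟩)
        exact FIN (T (segf s + 1)) (T (segf t)) hsTi1 (by linarith [not_le.mp L1])
          (Tmono (by omega)) (Tnonneg _) hTjt (by linarith [not_le.mp L2]) hk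
  -- conclusion
  intro s hs t ht
  rcases le_total s t with hst | hst
  · have hub := UB s t hs.1 hst ht.2
    have hlb := MAIN s t hs.1 hst ht.2
    have habs : |s - t| = t - s := by rw [abs_sub_comm]; exact abs_of_nonneg (by linarith)
    refine ⟨?_, by rw [habs]; exact hub⟩
    rw [habs]
    have h1 : (t-s)/(8*H) ≤ (t-s)/H := by
      apply div_le_div_of_nonneg_left (by linarith) hHpos (by linarith)
    have h2 : 1/(8*H) * (t-s) = (t-s)/(8*H) := by ring
    linarith
  · have hub := UB t s ht.1 hst hs.2
    have hlb := MAIN t s ht.1 hst hs.2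
    have habs : |s - t| = s - t := abs_of_nonneg (by linarith)
    rw [dist_comm (γ s) (γ t)]
    refine ⟨?_, by rw [habs]; exact hub⟩
    rw [habs]
    have h1 : (s-t)/(8*H) ≤ (s-t)/H := by
      apply div_le_div_of_nonneg_left (by linarith) hHpos (by linarith)
    have h2 : 1/(8*H) * (s-t) = (s-t)/(8*H) := by ring
    linarith
end
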